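/- Let (f_n)_{n∈ℕ} be a martingale with values in a Hilbert space H and let (w_n)_{n∈ℕ} be an adapted sequence of positive random variables (weights, not necessarily a martingale). Then for every N ∈ ℕ, E(|f_0|·w_0 + (1/4)·Σ_{n=1}^{N} (|df_n|²/f*_n)·w_n) ≤ E(f*_N · w*_N), where terms |df_n|²/f*_n are interpreted as 0 when f*_n = 0. -/

import Mathlib

open MeasureTheory Filter Set Finset

/-- Running maximum `f*_n(ω) = max_{k ≤ n} ‖f_k(ω)‖` of a vector-valued process. -/
noncomputable def mstar {Ω X : Type*} [NormedAddCommGroup X] (f : ℕ → Ω → X) (n : ℕ) (ω : Ω) : ℝ :=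
  (Finset.range (n + 1)).sup' (Finset.nonempty_range_iff.mpr (Nat.succ_ne_zero n))
    (fun k => ‖f k ω‖)

/-- Running maximum `w*_n(ω) = max_{k ≤ n} w_k(ω)` of a real-valued process. -/
noncomputable def runMax {Ω : Type*} (w : ℕ → Ω → ℝ) (n : ℕ) (ω : Ω) : ℝ :=
  (Finset.range (n + 1)).sup' (Finset.nonempty_range_iff.mpr (Nat.succ_ne_zero n))
    (fun k => w k ω)

open scoped RealInnerProductSpace

section PtAux

variable {Ω : Type*} {H : Type*} [NormedAddCommGroup H] [InnerProductSpace ℝ H]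

lemma mstar_zero (f : ℕ → Ω → H) (ω : Ω) : mstar f 0 ω = ‖f 0 ω‖ := by
  simp [mstar]

lemma mstar_succ (f : ℕ → Ω → H) (n : ℕ) (ω : Ω) :
    mstar f (n + 1) ω = max (mstar f n ω) ‖f (n + 1) ω‖ := by
  simp only [mstar, Finset.range_add_one (n := n + 1)]
  rw [Finset.sup'_insert (Finset.nonempty_range_iff.mpr (Nat.succ_ne_zero n))]
  rw [max_comm]

lemma norm_le_mstar (f : ℕ → Ω → H) {k n : ℕ} (h : k ≤ n) (ω : Ω) :
    ‖f k ω‖ ≤ mstar f n ω :=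
  Finset.le_sup' (fun k => ‖f k ω‖) (Finset.mem_range.mpr (Nat.lt_succ_of_le h))

lemma mstar_nonneg (f : ℕ → Ω → H) (n : ℕ) (ω : Ω) : 0 ≤ mstar f n ω :=
  (norm_nonneg _).trans (norm_le_mstar f (Nat.zero_le n) ω)

lemma mstar_mono (f : ℕ → Ω → H) {m n : ℕ} (h : m ≤ n) (ω : Ω) :
    mstar f m ω ≤ mstar f n ω := by
  apply Finset.sup'_le
  intro k hk
  exact norm_le_mstar f (le_trans (Nat.lt_succ_iff.mp (Finset.mem_range.mp hk)) h) ω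

lemma runMax_zero (w : ℕ → Ω → ℝ) (ω : Ω) : runMax w 0 ω = w 0 ω := by
  simp [runMax]

lemma runMax_succ (w : ℕ → Ω → ℝ) (n : ℕ) (ω : Ω) :
    runMax w (n + 1) ω = max (runMax w n ω) (w (n + 1) ω) := by
  simp only [runMax, Finset.range_add_one (n := n + 1)]
  rw [Finset.sup'_insert (Finset.nonempty_range_iff.mpr (Nat.succ_ne_zero n))]
  rw [max_comm]

lemma le_runMax (w : ℕ → Ω → ℝ) {k n : ℕ} (h : k ≤ n) (ω : Ω) :
    w k ω ≤ runMax w n ω :=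
  Finset.le_sup' (fun k => w k ω) (Finset.mem_range.mpr (Nat.lt_succ_of_le h))

lemma runMax_mono (w : ℕ → Ω → ℝ) {m n : ℕ} (h : m ≤ n) (ω : Ω) :
    runMax w m ω ≤ runMax w n ω := by
  apply Finset.sup'_le
  intro k hk
  exact le_runMax w (le_trans (Nat.lt_succ_iff.mp (Finset.mem_range.mp hk)) h) ω

/-- The core deterministic inequality behind the Davis estimate. -/
lemma key_ineq (x y : H) {S T : ℝ} (hx : ‖x‖ ≤ S) (hy : ‖y‖ ≤ T) (hST : S ≤ T) (hS : 0 ≤ S) :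
    (1/4) * (‖y - x‖^2 / T) + ⟪(2*S)⁻¹ • x, y - x⟫ ≤
      (1/2) * (‖y‖^2/(2*T) - ‖x‖^2/(2*S)) + (3/4) * (T - S) := by
  rcases eq_or_lt_of_le hS with hS0 | hSpos
  · -- S = 0, x = 0
    have hx0 : x = 0 := norm_le_zero_iff.mp (by linarith)
    subst hx0
    have hT : 0 ≤ T := le_trans hS hST
    simp only [smul_zero, inner_zero_left, sub_zero, norm_zero]
    have : (0:ℝ)^2 / (2*S) = 0 := by simp
    rw [this]
    have h1 : (1/4 : ℝ) * (‖y‖^2 / T) = (1/2) * (‖y‖^2/(2*T)) := by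
      ring
    rw [add_zero, h1]
    have : (0:ℝ) ≤ (3/4) * (T - S) := by nlinarith
    linarith
  · have hT : 0 < T := lt_of_lt_of_le hSpos hST
    have hI : ⟪(2*S)⁻¹ • x, y - x⟫ = (2*S)⁻¹ * (⟪x, y⟫ - ‖x‖^2) := by
      rw [real_inner_smul_left, inner_sub_right, real_inner_self_eq_norm_sq]
    set A := ‖x‖ with hA
    set B := ‖y‖ with hB
    set D := ‖y - x‖ with hDdef
    have hD2 : D^2 = B^2 - 2*⟪x, y⟫ + A^2 := by
      rw [hDdef, hB, hA, @norm_sub_sq_real, real_inner_comm]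
    have hIxy : ⟪x, y⟫ = (B^2 + A^2 - D^2)/2 := by linarith
    have hA0 : 0 ≤ A := norm_nonneg _
    have hB0 : 0 ≤ B := norm_nonneg _
    have hD0 : 0 ≤ D := norm_nonneg _
    have htri : B ≤ D + A := by
      calc B = ‖(y - x) + x‖ := by rw [hB, sub_add_cancel]
      _ ≤ D + A := norm_add_le _ _
    have hDle : D ≤ B + A := norm_sub_le _ _
    have hkey : B^2 - D^2 ≤ 3*(S*T) := by
      rcases le_total B D with h | h
      · nlinarith
      · have h1 : B - D ≤ A := by linarith
        have h2 : B + D ≤ 3*T := by linarith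
        calc B^2 - D^2 = (B - D) * (B + D) := by ring
        _ ≤ S * (3*T) := mul_le_mul (by linarith) h2 (by linarith) (by linarith)
        _ = 3*(S*T) := by ring
    rw [hI, hIxy]
    have expand : (1/2) * (B^2/(2*T) - A^2/(2*S)) + (3/4) * (T - S)
        - ((1/4) * (D^2 / T) + (2*S)⁻¹ * ((B^2 + A^2 - D^2)/2 - A^2))
        = ((T - S) * (3*(S*T) - (B^2 - D^2))) / (4*S*T) := by
      field_simp
      ring
    have hnum : 0 ≤ ((T - S) * (3*(S*T) - (B^2 - D^2))) / (4*S*T) := by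
      apply div_nonneg
      · apply mul_nonneg (by linarith) (by linarith)
      · positivity
    linarith

end PtAux
section PtAux2

open MeasureTheory Filter Set Finset
open scoped RealInnerProductSpace

variable {Ω : Type*} {H : Type*} [NormedAddCommGroup H] [InnerProductSpace ℝ H]

/-- Increments of the running maximum of the weight process. -/
noncomputable def dW {Ω : Type*} (w : ℕ → Ω → ℝ) : ℕ → Ω → ℝ
  | 0 => fun ω => runMax w 0 ω
  | (m+1) => fun ω => runMax w (m+1) ω - runMax w m ω

lemma dW_nonneg (w : ℕ → Ω → ℝ) (hw_pos : ∀ n ω, 0 < w n ω) (m : ℕ) (ω : Ω) :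
    0 ≤ dW w m ω := by
  cases m with
  | zero => simpa [dW, runMax_zero] using (hw_pos 0 ω).le
  | succ m => simpa [dW] using runMax_mono w (Nat.le_succ m) ω

lemma sum_dW (w : ℕ → Ω → ℝ) (n : ℕ) (ω : Ω) :
    ∑ m ∈ Finset.range (n+1), dW w m ω = runMax w n ω := by
  induction n with
  | zero => simp [dW]
  | succ n ih => rw [Finset.sum_range_succ, ih]; simp [dW]

lemma dW_le (w : ℕ → Ω → ℝ) (hw_pos : ∀ n ω, 0 < w n ω) {m n : ℕ} (h : m ≤ n) (ω : Ω) :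
    dW w m ω ≤ runMax w n ω := by
  cases m with
  | zero => simpa [dW] using runMax_mono w (Nat.zero_le n) ω
  | succ m =>
      have h0 : 0 ≤ runMax w m ω := le_trans (hw_pos 0 ω).le (le_runMax w (Nat.zero_le m) ω)
      have := runMax_mono w h ω
      simp only [dW]
      linarith

lemma bsq_le (f : ℕ → Ω → H) (n : ℕ) (ω : Ω) :
    ‖f n ω‖^2/(2 * mstar f n ω) ≤ mstar f n ω / 2 := by
  rcases eq_or_lt_of_le (mstar_nonneg f n ω) with h | h
  · have h0 : ‖f n ω‖ = 0 := le_antisymm (h ▸ norm_le_mstar f le_rfl ω) (norm_nonneg _)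
    rw [h0, ← h]; norm_num
  · have h2 : ‖f n ω‖^2 ≤ (mstar f n ω)^2 := by
      have := norm_le_mstar f (le_refl n) ω
      nlinarith [norm_nonneg (f n ω)]
    have e : (mstar f n ω)^2 / (2 * mstar f n ω) = mstar f n ω / 2 := by
      field_simp
    calc ‖f n ω‖^2/(2 * mstar f n ω) ≤ (mstar f n ω)^2 / (2 * mstar f n ω) :=
          (div_le_div_iff_of_pos_right (by positivity)).mpr h2
    _ = mstar f n ω / 2 := e

lemma bsq_zero (f : ℕ → Ω → H) (ω : Ω) :
    ‖f 0 ω‖^2/(2 * mstar f 0 ω) = mstar f 0 ω / 2 := by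
  rw [mstar_zero]
  rcases eq_or_lt_of_le (norm_nonneg (f 0 ω)) with h | h
  · rw [← h]; norm_num
  · field_simp

lemma head_bound (f : ℕ → Ω → H) (m : ℕ) (ω : Ω) :
    (1/4) * (‖f m ω - f (m-1) ω‖^2 / mstar f m ω)
      ≤ (1/2) * (‖f m ω‖^2 / (2 * mstar f m ω)) + (3/4) * mstar f m ω := by
  rcases eq_or_lt_of_le (mstar_nonneg f m ω) with h | h
  · have h0 : ‖f m ω‖ = 0 := le_antisymm (h ▸ norm_le_mstar f le_rfl ω) (norm_nonneg _)
    have h1 : ‖f (m-1) ω‖ = 0 :=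
      le_antisymm (le_trans (norm_le_mstar f (Nat.sub_le m 1) ω) h.symm.le) (norm_nonneg _)
    have h2 : f m ω = 0 := norm_eq_zero.mp h0
    have h3 : f (m-1) ω = 0 := norm_eq_zero.mp h1
    rw [h2, h3, ← h]
    norm_num
  · have hd : ‖f m ω - f (m-1) ω‖ ≤ ‖f m ω‖ + mstar f m ω := by
      have := norm_le_mstar f (Nat.sub_le m 1) ω
      have := norm_sub_le (f m ω) (f (m-1) ω)
      linarith
    have hA : ‖f m ω‖ ≤ mstar f m ω := norm_le_mstar f le_rfl ω
    have hd2 : ‖f m ω - f (m-1) ω‖^2 ≤ ‖f m ω‖^2 + 3 * (mstar f m ω)^2 := by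
      nlinarith [norm_nonneg (f m ω - f (m-1) ω), norm_nonneg (f m ω)]
    have e1 : (1/4:ℝ) * ((‖f m ω‖^2 + 3 * (mstar f m ω)^2)/ mstar f m ω)
        = (1/2) * (‖f m ω‖^2 / (2 * mstar f m ω)) + (3/4) * mstar f m ω := by
      field_simp
      ring
    calc (1/4) * (‖f m ω - f (m-1) ω‖^2 / mstar f m ω)
        ≤ (1/4) * ((‖f m ω‖^2 + 3 * (mstar f m ω)^2)/ mstar f m ω) := by
          have := (div_le_div_iff_of_pos_right h).mpr hd2
          linarith
    _ = _ := e1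

lemma step3 (f : ℕ → Ω → H) (N m : ℕ) (hm : m ≤ N) (ω : Ω) :
    (if m = 0 then ‖f 0 ω‖ else 0)
      + (1/4) * ∑ n ∈ Finset.Icc (max m 1) N, ‖f n ω - f (n-1) ω‖^2 / mstar f n ω
      + ∑ n ∈ Finset.Icc (m+1) N, ⟪(2 * mstar f (n-1) ω)⁻¹ • f (n-1) ω, f n ω - f (n-1) ω⟫
    ≤ mstar f N ω := by
  have tel : ∀ k, m ≤ k →
      (1/4) * (∑ n ∈ Finset.Icc (m+1) k, ‖f n ω - f (n-1) ω‖^2 / mstar f n ω)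
        + ∑ n ∈ Finset.Icc (m+1) k, ⟪(2 * mstar f (n-1) ω)⁻¹ • f (n-1) ω, f n ω - f (n-1) ω⟫
      ≤ (1/2) * (‖f k ω‖^2/(2 * mstar f k ω) - ‖f m ω‖^2/(2 * mstar f m ω))
        + (3/4) * (mstar f k ω - mstar f m ω) := by
    intro k hk
    induction k, hk using Nat.le_induction with
    | base => simp [Finset.Icc_eq_empty_of_lt (Nat.lt_succ_self m)]
    | succ k hk ih =>
        rw [Finset.sum_Icc_succ_top (Nat.succ_le_succ hk),
          Finset.sum_Icc_succ_top (Nat.succ_le_succ hk)]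
        have hkey := key_ineq (f k ω) (f (k+1) ω)
          (norm_le_mstar f le_rfl ω)
          (norm_le_mstar f le_rfl ω)
          (mstar_mono f (Nat.le_succ k) ω) (mstar_nonneg f k ω)
        simp only [Nat.add_sub_cancel] at hkey ⊢
        linarith
  have hbN := bsq_le f N ω
  cases m with
  | zero =>
      have htel := tel N (Nat.zero_le N)
      have hb0 := bsq_zero f ω
      have hm0 : mstar f 0 ω = ‖f 0 ω‖ := mstar_zero f ω
      simp only [if_pos rfl, if_true, Nat.max_eq_right (Nat.zero_le 1), Nat.zero_add] at *
      have hmono := mstar_mono f (Nat.zero_le N) ω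
      linarith
  | succ m' =>
      have hmax : max (m'+1) 1 = m'+1 := Nat.max_eq_left (Nat.succ_le_succ (Nat.zero_le m'))
      rw [hmax, if_neg (Nat.succ_ne_zero m')]
      rw [Finset.Icc_eq_cons_Ioc hm, Finset.sum_cons, ← Finset.Icc_add_one_left_eq_Ioc]
      have htel := tel (N) (by exact hm)
      have hhead := head_bound f (m'+1) ω
      have hmono := mstar_mono f hm ω
      have hb := bsq_le f (m'+1) ω
      rw [mul_add]
      linarith

end PtAux2
section PtAux3

open MeasureTheory Filter Set Finset
open scoped RealInnerProductSpace

variable {Ω : Type*} {H : Type*} [NormedAddCommGroup H] [InnerProductSpace ℝ H]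

lemma pointwise_bound (f : ℕ → Ω → H) (w : ℕ → Ω → ℝ) (hw_pos : ∀ n ω, 0 < w n ω)
    (N : ℕ) (ω : Ω) :
    ‖f 0 ω‖ * w 0 ω
      + (1/4) * ∑ n ∈ Finset.Icc 1 N, (‖f n ω - f (n-1) ω‖^2 / mstar f n ω) * w n ω
    ≤ mstar f N ω * runMax w N ω
      - ∑ m ∈ Finset.range (N+1), dW w m ω *
          ∑ n ∈ Finset.Icc (m+1) N, ⟪(2 * mstar f (n-1) ω)⁻¹ • f (n-1) ω, f n ω - f (n-1) ω⟫ := by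
  set T : ℕ → ℝ := fun m => ∑ n ∈ Finset.Icc (m+1) N,
    ⟪(2 * mstar f (n-1) ω)⁻¹ • f (n-1) ω, f n ω - f (n-1) ω⟫ with hT
  set c : ℕ → ℝ := fun n => ‖f n ω - f (n-1) ω‖^2 / mstar f n ω with hc
  have hc0 : ∀ n, 0 ≤ c n := fun n => div_nonneg (sq_nonneg _) (mstar_nonneg f n ω)
  have hd0 : ∀ m, 0 ≤ dW w m ω := fun m => dW_nonneg w hw_pos m ω
  have step1 : ‖f 0 ω‖ * w 0 ω + (1/4) * ∑ n ∈ Finset.Icc 1 N, c n * w n ω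
      ≤ ‖f 0 ω‖ * runMax w 0 ω + (1/4) * ∑ n ∈ Finset.Icc 1 N, c n * runMax w n ω := by
    apply add_le_add
    · rw [runMax_zero]
    · apply mul_le_mul_of_nonneg_left _ (by norm_num)
      apply Finset.sum_le_sum
      intro n _
      exact mul_le_mul_of_nonneg_left (le_runMax w le_rfl ω) (hc0 n)
  have hswap : ∑ n ∈ Finset.Icc 1 N, c n * runMax w n ω
      = ∑ m ∈ Finset.range (N+1), ∑ n ∈ Finset.Icc (max m 1) N, c n * dW w m ω := by
    calc ∑ n ∈ Finset.Icc 1 N, c n * runMax w n ω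
        = ∑ n ∈ Finset.Icc 1 N, ∑ m ∈ Finset.range (n+1), c n * dW w m ω := by
          refine Finset.sum_congr rfl fun n _ => ?_
          rw [← Finset.mul_sum, sum_dW]
    _ = _ := Finset.sum_comm' (fun n m => by
          simp only [Finset.mem_Icc, Finset.mem_range, Nat.lt_succ_iff]
          omega)
  have step3' : ∀ m ∈ Finset.range (N+1),
      ((if m = 0 then ‖f 0 ω‖ * dW w m ω else 0)
        + (1/4) * ∑ n ∈ Finset.Icc (max m 1) N, c n * dW w m ω)
        ≤ dW w m ω * mstar f N ω - dW w m ω * T m := by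
    intro m hm
    have h3 := step3 f N m (Nat.lt_succ_iff.mp (Finset.mem_range.mp hm)) ω
    have hd := hd0 m
    have hmul := mul_le_mul_of_nonneg_right h3 hd
    rw [← Finset.sum_mul]
    rcases eq_or_ne m 0 with h0 | h0
    · subst h0
      simp only [if_pos rfl, if_true, hT, hc] at hmul ⊢
      nlinarith [hmul]
    · simp only [if_neg h0, hT, hc] at hmul ⊢
      nlinarith [hmul]
  calc ‖f 0 ω‖ * w 0 ω + (1/4) * ∑ n ∈ Finset.Icc 1 N, c n * w n ω
      ≤ ‖f 0 ω‖ * runMax w 0 ω + (1/4) * ∑ n ∈ Finset.Icc 1 N, c n * runMax w n ω := step1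
  _ = ∑ m ∈ Finset.range (N+1), ((if m = 0 then ‖f 0 ω‖ * dW w m ω else 0)
        + (1/4) * ∑ n ∈ Finset.Icc (max m 1) N, c n * dW w m ω) := by
      rw [hswap, Finset.sum_add_distrib, ← Finset.mul_sum]
      congr 1
      rw [Finset.sum_ite_eq' (Finset.range (N+1)) 0
        (fun m => ‖f 0 ω‖ * dW w m ω)]
      simp [dW]
  _ ≤ ∑ m ∈ Finset.range (N+1), (dW w m ω * mstar f N ω - dW w m ω * T m) :=
      Finset.sum_le_sum step3'
  _ = mstar f N ω * runMax w N ω - ∑ m ∈ Finset.range (N+1), dW w m ω * T m := by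
      rw [Finset.sum_sub_distrib, ← Finset.sum_mul, sum_dW]
      ring

end PtAux3
section MeasAux

open MeasureTheory Filter Set Finset
open scoped RealInnerProductSpace

variable {Ω : Type*} {mΩ : MeasurableSpace Ω} {μ : MeasureTheory.Measure Ω}
  {m : MeasurableSpace Ω}
  {H : Type*} [NormedAddCommGroup H] [InnerProductSpace ℝ H] [CompleteSpace H]

lemma integrable_inner_of_bound {X Z : Ω → H} (hX : AEStronglyMeasurable[mΩ] X μ)
    (hZ : MeasureTheory.Integrable Z μ) {G : Ω → ℝ} (hG : MeasureTheory.Integrable G μ)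
    (h : ∀ ω, ‖X ω‖ * ‖Z ω‖ ≤ G ω) :
    MeasureTheory.Integrable (fun ω => ⟪X ω, Z ω⟫) μ := by
  refine hG.mono' (hX.inner hZ.1) (Filter.Eventually.of_forall fun ω => ?_)
  calc ‖⟪X ω, Z ω⟫‖ = |⟪X ω, Z ω⟫| := rfl
  _ ≤ ‖X ω‖ * ‖Z ω‖ := abs_real_inner_le_norm _ _
  _ ≤ G ω := h ω

lemma integral_inner_simpleFunc (hm : m ≤ mΩ) [SigmaFinite (μ.trim hm)]
    {Z : Ω → H} (hZ : MeasureTheory.Integrable Z μ) (hZ0 : μ[Z|m] =ᵐ[μ] 0)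
    (φ : @MeasureTheory.SimpleFunc Ω m H) :
    ∫ ω, ⟪φ ω, Z ω⟫ ∂μ = 0 := by
  have hint : ∀ (ψ : @MeasureTheory.SimpleFunc Ω m H),
      MeasureTheory.Integrable (fun ω => ⟪ψ ω, Z ω⟫) μ := by
    intro ψ
    obtain ⟨C, hC⟩ := ψ.exists_forall_norm_le
    refine integrable_inner_of_bound ((ψ.stronglyMeasurable.mono hm).aestronglyMeasurable) hZ
      (hZ.norm.const_mul C) fun ω => ?_
    exact mul_le_mul_of_nonneg_right (hC ω) (norm_nonneg _)
  refine MeasureTheory.SimpleFunc.induction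
    (motive := fun (ψ : @MeasureTheory.SimpleFunc Ω m H) => ∫ ω, ⟪ψ ω, Z ω⟫ ∂μ = 0)
    (fun c s hs => ?_) (fun ψ₁ ψ₂ _ h₁ h₂ => ?_) φ
  · 
    have hind : ∀ ω, ⟪(MeasureTheory.SimpleFunc.piecewise s hs
        (MeasureTheory.SimpleFunc.const Ω c) (MeasureTheory.SimpleFunc.const Ω 0)) ω, Z ω⟫
        = Set.indicator s (fun ω => ⟪c, Z ω⟫) ω := by
      intro ω
      classical
      by_cases hω : ω ∈ s <;>
        simp [MeasureTheory.SimpleFunc.piecewise_apply, Set.indicator, hω]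
    rw [MeasureTheory.integral_congr_ae (Filter.Eventually.of_forall hind)]
    have hs' : MeasurableSet[mΩ] s := hm s hs
    rw [@MeasureTheory.integral_indicator Ω ℝ mΩ _ _ _ s μ hs']
    rw [integral_inner (hZ.restrict (s := s)) c]
    have hZs : ∫ ω in s, Z ω ∂μ = 0 := by
      rw [← MeasureTheory.setIntegral_condExp hm hZ hs]
      calc ∫ ω in s, (μ[Z|m]) ω ∂μ = ∫ ω in s, (0:H) ∂μ :=
            @MeasureTheory.setIntegral_congr_ae Ω H mΩ _ _ _ _ s μ (hm s hs)
              (by filter_upwards [hZ0] with ω hω _ using hω)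
      _ = 0 := by simp
    rw [hZs, inner_zero_right]
  · have e : ∀ ω, ⟪(ψ₁ + ψ₂) ω, Z ω⟫ = ⟪ψ₁ ω, Z ω⟫ + ⟪ψ₂ ω, Z ω⟫ := by
      intro ω
      simp [inner_add_left]
    rw [MeasureTheory.integral_congr_ae (Filter.Eventually.of_forall e),
      MeasureTheory.integral_add (hint ψ₁) (hint ψ₂), h₁, h₂, add_zero]

lemma integral_inner_zero_of_bounded (hm : m ≤ mΩ) [SigmaFinite (μ.trim hm)]
    {Z : Ω → H} (hZ : MeasureTheory.Integrable Z μ) (hZ0 : μ[Z|m] =ᵐ[μ] 0)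
    {X : Ω → H} (hX : StronglyMeasurable[m] X)
    {c : ℝ} (hc : 0 ≤ c) (hXc : ∀ ω, ‖X ω‖ ≤ c) :
    ∫ ω, ⟪X ω, Z ω⟫ ∂μ = 0 := by
  set fs := hX.approxBounded c with hfs
  have htend : ∀ ω, Filter.Tendsto (fun k => fs k ω) Filter.atTop (nhds (X ω)) :=
    fun ω => hX.tendsto_approxBounded_of_norm_le (hXc ω)
  have hb : ∀ k ω, ‖fs k ω‖ ≤ c := fun k => hX.norm_approxBounded_le hc k
  have hlim : Filter.Tendsto (fun k => ∫ ω, ⟪fs k ω, Z ω⟫ ∂μ) Filter.atTop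
      (nhds (∫ ω, ⟪X ω, Z ω⟫ ∂μ)) := by
    refine MeasureTheory.tendsto_integral_of_dominated_convergence (fun ω => c * ‖Z ω‖)
      (fun k => ((fs k).stronglyMeasurable.mono hm).aestronglyMeasurable.inner hZ.1)
      (hZ.norm.const_mul c) (fun k => Filter.Eventually.of_forall fun ω => ?_)
      (Filter.Eventually.of_forall fun ω => ?_)
    · calc ‖⟪fs k ω, Z ω⟫‖ ≤ ‖fs k ω‖ * ‖Z ω‖ := abs_real_inner_le_norm _ _
      _ ≤ c * ‖Z ω‖ := mul_le_mul_of_nonneg_right (hb k ω) (norm_nonneg _)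
    · exact Filter.Tendsto.inner (htend ω) tendsto_const_nhds
  have hzero : ∀ k, ∫ ω, ⟪fs k ω, Z ω⟫ ∂μ = 0 :=
    fun k => integral_inner_simpleFunc hm hZ hZ0 (fs k)
  have : Filter.Tendsto (fun k : ℕ => (0:ℝ)) Filter.atTop (nhds (∫ ω, ⟪X ω, Z ω⟫ ∂μ)) := by
    simpa [hzero] using hlim
  exact tendsto_nhds_unique this tendsto_const_nhds

lemma integral_inner_zero (hm : m ≤ mΩ) [SigmaFinite (μ.trim hm)]
    {Z : Ω → H} (hZ : MeasureTheory.Integrable Z μ) (hZ0 : μ[Z|m] =ᵐ[μ] 0)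
    {X : Ω → H} (hX : StronglyMeasurable[m] X)
    {G : Ω → ℝ} (hG : MeasureTheory.Integrable G μ)
    (hXZ : ∀ ω, ‖X ω‖ * ‖Z ω‖ ≤ G ω) :
    ∫ ω, ⟪X ω, Z ω⟫ ∂μ = 0 := by
  set T : ℕ → H → H := fun k v => (((k:ℝ)+1) / max ((k:ℝ)+1) ‖v‖) • v with hTdef
  have hmaxpos : ∀ (k : ℕ) (v : H), (0:ℝ) < max ((k:ℝ)+1) ‖v‖ :=
    fun k v => lt_of_lt_of_le (by positivity) (le_max_left _ _)
  have hTcont : ∀ k, Continuous (T k) := by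
    intro k
    exact (Continuous.div continuous_const (continuous_const.max continuous_norm)
      (fun v => (hmaxpos k v).ne')).smul continuous_id
  have hTnorm : ∀ k v, ‖T k v‖ = (((k:ℝ)+1) / max ((k:ℝ)+1) ‖v‖) * ‖v‖ := by
    intro k v
    rw [hTdef]
    simp only [norm_smul, Real.norm_eq_abs]
    rw [abs_of_nonneg (by positivity)]
  have hTle : ∀ k v, ‖T k v‖ ≤ ‖v‖ := by
    intro k v
    rw [hTnorm]
    apply mul_le_of_le_one_left (norm_nonneg v)
    rw [div_le_one (hmaxpos k v)]
    exact le_max_left _ _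
  have hTbdd : ∀ k v, ‖T k v‖ ≤ (k:ℝ)+1 := by
    intro k v
    rw [hTnorm, div_mul_eq_mul_div, div_le_iff₀ (hmaxpos k v)]
    exact mul_le_mul_of_nonneg_left (le_max_right _ _) (by positivity)
  have hXk : ∀ k, StronglyMeasurable[m] (fun ω => T k (X ω)) :=
    fun k => (hTcont k).comp_stronglyMeasurable hX
  have htend : ∀ ω, Filter.Tendsto (fun k => T k (X ω)) Filter.atTop (nhds (X ω)) := by
    intro ω
    have hev : ∀ᶠ (k : ℕ) in Filter.atTop, T k (X ω) = X ω := by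
      rw [Filter.eventually_atTop]
      refine ⟨⌈‖X ω‖⌉₊, fun k hk => ?_⟩
      have h1 : ‖X ω‖ ≤ (k:ℝ)+1 := by
        calc ‖X ω‖ ≤ (⌈‖X ω‖⌉₊ : ℝ) := Nat.le_ceil _
        _ ≤ (k:ℝ) := by exact_mod_cast hk
        _ ≤ (k:ℝ)+1 := by linarith
      have h2 : max ((k:ℝ)+1) ‖X ω‖ = (k:ℝ)+1 := max_eq_left h1
      rw [hTdef]
      simp only [h2]
      rw [div_self (by positivity), one_smul]
    exact Filter.Tendsto.congr' (Filter.EventuallyEq.symm hev) tendsto_const_nhds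
  have hlim : Filter.Tendsto (fun k => ∫ ω, ⟪T k (X ω), Z ω⟫ ∂μ) Filter.atTop
      (nhds (∫ ω, ⟪X ω, Z ω⟫ ∂μ)) := by
    refine MeasureTheory.tendsto_integral_of_dominated_convergence G
      (fun k => (((hXk k).mono hm).aestronglyMeasurable).inner hZ.1)
      hG (fun k => Filter.Eventually.of_forall fun ω => ?_)
      (Filter.Eventually.of_forall fun ω => ?_)
    · calc ‖⟪T k (X ω), Z ω⟫‖ ≤ ‖T k (X ω)‖ * ‖Z ω‖ := abs_real_inner_le_norm _ _
      _ ≤ ‖X ω‖ * ‖Z ω‖ := mul_le_mul_of_nonneg_right (hTle k (X ω)) (norm_nonneg _)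
      _ ≤ G ω := hXZ ω
    · exact Filter.Tendsto.inner (htend ω) tendsto_const_nhds
  have hzero : ∀ k, ∫ ω, ⟪T k (X ω), Z ω⟫ ∂μ = 0 := by
    intro k
    exact integral_inner_zero_of_bounded hm hZ hZ0 (hXk k) (by positivity)
      (fun ω => hTbdd k (X ω))
  have : Filter.Tendsto (fun k : ℕ => (0:ℝ)) Filter.atTop (nhds (∫ ω, ⟪X ω, Z ω⟫ ∂μ)) := by
    simpa [hzero] using hlim
  exact tendsto_nhds_unique this tendsto_const_nhds

end MeasAux
section MeasAux2

open MeasureTheory Filter Set Finset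
open scoped RealInnerProductSpace

variable {Ω : Type*} {mΩ : MeasurableSpace Ω} {ℱ : MeasureTheory.Filtration ℕ mΩ}
  {H : Type*} [NormedAddCommGroup H] [InnerProductSpace ℝ H]

lemma mstar_stronglyMeasurable {f : ℕ → Ω → H} (hfa : MeasureTheory.StronglyAdapted ℱ f) (n : ℕ) :
    StronglyMeasurable[ℱ n] (fun ω => mstar f n ω) := by
  induction n with
  | zero =>
      have : (fun ω => mstar f 0 ω) = fun ω => ‖f 0 ω‖ := funext fun ω => mstar_zero f ω
      rw [this]
      exact (hfa 0).norm
  | succ n ih =>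
      have : (fun ω => mstar f (n+1) ω) = fun ω => max (mstar f n ω) ‖f (n+1) ω‖ :=
        funext fun ω => mstar_succ f n ω
      rw [this]
      exact ((ih.mono (ℱ.mono (Nat.le_succ n))).measurable.max
        (hfa (n+1)).norm.measurable).stronglyMeasurable

lemma runMax_stronglyMeasurable {w : ℕ → Ω → ℝ} (hwa : MeasureTheory.StronglyAdapted ℱ w) (n : ℕ) :
    StronglyMeasurable[ℱ n] (fun ω => runMax w n ω) := by
  induction n with
  | zero =>
      have : (fun ω => runMax w 0 ω) = fun ω => w 0 ω := funext fun ω => runMax_zero w ω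
      rw [this]
      exact hwa 0
  | succ n ih =>
      have : (fun ω => runMax w (n+1) ω) = fun ω => max (runMax w n ω) (w (n+1) ω) :=
        funext fun ω => runMax_succ w n ω
      rw [this]
      exact ((ih.mono (ℱ.mono (Nat.le_succ n))).measurable.max
        (hwa (n+1)).measurable).stronglyMeasurable

lemma u_norm_le (f : ℕ → Ω → H) (n : ℕ) (ω : Ω) :
    ‖(2 * mstar f n ω)⁻¹ • f n ω‖ ≤ 1/2 := by
  rcases eq_or_lt_of_le (mstar_nonneg f n ω) with h | h
  · have h0 : f n ω = 0 := norm_eq_zero.mp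
      (le_antisymm (h ▸ norm_le_mstar f le_rfl ω) (norm_nonneg _))
    rw [h0, smul_zero, norm_zero]
    norm_num
  · rw [norm_smul, Real.norm_eq_abs, abs_of_nonneg (by positivity)]
    rw [inv_mul_le_iff₀ (by positivity)]
    have := norm_le_mstar f (le_refl n) ω
    linarith

end MeasAux2
open scoped RealInnerProductSpace in
/-- Weighted Davis-type inequality with constant 1/4 for Hilbert-space-valued martingales. -/
theorem davis_weighted_one_fourth
    {Ω : Type*} {mΩ : MeasurableSpace Ω} {μ : Measure Ω} [IsProbabilityMeasure μ]
    {ℱ : Filtration ℕ mΩ}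
    {H : Type*} [NormedAddCommGroup H] [InnerProductSpace ℝ H] [CompleteSpace H]
    (f : ℕ → Ω → H) (hf : Martingale f ℱ μ)
    (w : ℕ → Ω → ℝ) (hw_adapted : StronglyAdapted ℱ w) (hw_pos : ∀ n ω, 0 < w n ω)
    (N : ℕ)
    (hL : Integrable (fun ω =>
      ‖f 0 ω‖ * w 0 ω
        + (1/4) * ∑ n ∈ Finset.Icc 1 N, (‖f n ω - f (n-1) ω‖^2 / mstar f n ω) * w n ω) μ)
    (hR : Integrable (fun ω => mstar f N ω * runMax w N ω) μ) :
    ∫ ω, (‖f 0 ω‖ * w 0 ω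
        + (1/4) * ∑ n ∈ Finset.Icc 1 N, (‖f n ω - f (n-1) ω‖^2 / mstar f n ω) * w n ω) ∂μ
      ≤ ∫ ω, mstar f N ω * runMax w N ω ∂μ := by
  classical
  -- strong measurability of the building blocks
  have hsm : ∀ n, StronglyMeasurable[ℱ n] (fun ω => mstar f n ω) :=
    mstar_stronglyMeasurable hf.stronglyAdapted
  have hwm : ∀ n, StronglyMeasurable[ℱ n] (fun ω => runMax w n ω) :=
    runMax_stronglyMeasurable hw_adapted
  have hdm : ∀ m, StronglyMeasurable[ℱ m] (fun ω => dW w m ω) := by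
    intro m
    cases m with
    | zero => exact hwm 0
    | succ m => exact (hwm (m+1)).sub ((hwm m).mono (ℱ.mono (Nat.le_succ m)))
  have hum : ∀ n, StronglyMeasurable[ℱ n] (fun ω => (2 * mstar f n ω)⁻¹ • f n ω) := by
    intro n
    exact (((hsm n).measurable.const_mul 2).inv.stronglyMeasurable).smul (hf.stronglyAdapted n)
  -- bound on the norm of the integrand pieces
  have hdf_bound : ∀ n, n ≤ N → ∀ ω : Ω, ‖f n ω - f (n-1) ω‖ ≤ 2 * mstar f N ω := by
    intro n hn ω
    have h1 := norm_le_mstar f hn ω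
    have h2 := norm_le_mstar f (le_trans (Nat.sub_le n 1) hn) ω
    have := norm_sub_le (f n ω) (f (n-1) ω)
    linarith
  have hd_bound : ∀ m, m ≤ N → ∀ ω : Ω, dW w m ω ≤ runMax w N ω :=
    fun m hm ω => dW_le w hw_pos hm ω
  have hd_nonneg : ∀ m (ω : Ω), 0 ≤ dW w m ω := fun m ω => dW_nonneg w hw_pos m ω
  have hW_nonneg : ∀ ω : Ω, 0 ≤ runMax w N ω :=
    fun ω => le_trans (hw_pos 0 ω).le (le_runMax w (Nat.zero_le N) ω)
  have hs_nonneg : ∀ ω : Ω, 0 ≤ mstar f N ω := fun ω => mstar_nonneg f N ω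
  -- each summand of the correction term is integrable
  have hint_each : ∀ m, m ≤ N → ∀ n, m+1 ≤ n → n ≤ N →
      Integrable (fun ω => dW w m ω *
        ⟪(2 * mstar f (n-1) ω)⁻¹ • f (n-1) ω, f n ω - f (n-1) ω⟫) μ := by
    intro m hmN n hmn hnN
    have hmeas : AEStronglyMeasurable (fun ω => dW w m ω *
        ⟪(2 * mstar f (n-1) ω)⁻¹ • f (n-1) ω, f n ω - f (n-1) ω⟫) μ := by
      refine AEStronglyMeasurable.mul ?_ ?_
      · exact ((hdm m).mono (ℱ.le m)).aestronglyMeasurable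
      · exact AEStronglyMeasurable.inner
          (((hum (n-1)).mono (ℱ.le (n-1))).aestronglyMeasurable)
          ((((hf.stronglyAdapted n).mono (ℱ.le n)).sub
            ((hf.stronglyAdapted (n-1)).mono (ℱ.le (n-1)))).aestronglyMeasurable)
    refine hR.mono' hmeas (Filter.Eventually.of_forall fun ω => ?_)
    have h1 : |⟪(2 * mstar f (n-1) ω)⁻¹ • f (n-1) ω, f n ω - f (n-1) ω⟫|
        ≤ (1/2) * (2 * mstar f N ω) := by
      calc |⟪(2 * mstar f (n-1) ω)⁻¹ • f (n-1) ω, f n ω - f (n-1) ω⟫|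
          ≤ ‖(2 * mstar f (n-1) ω)⁻¹ • f (n-1) ω‖ * ‖f n ω - f (n-1) ω‖ :=
            abs_real_inner_le_norm _ _
      _ ≤ (1/2) * (2 * mstar f N ω) := by
            apply mul_le_mul (u_norm_le f (n-1) ω) (hdf_bound n hnN ω) (norm_nonneg _)
            norm_num
    rw [Real.norm_eq_abs, abs_mul, abs_of_nonneg (hd_nonneg m ω)]
    calc dW w m ω * |⟪(2 * mstar f (n-1) ω)⁻¹ • f (n-1) ω, f n ω - f (n-1) ω⟫|
        ≤ runMax w N ω * ((1/2) * (2 * mstar f N ω)) := by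
          apply mul_le_mul (hd_bound m hmN ω) h1 (abs_nonneg _) (hW_nonneg ω)
    _ = mstar f N ω * runMax w N ω := by ring
  -- each summand integrates to zero
  have hvanish : ∀ m, m ≤ N → ∀ n, m+1 ≤ n → n ≤ N →
      ∫ ω, dW w m ω *
        ⟪(2 * mstar f (n-1) ω)⁻¹ • f (n-1) ω, f n ω - f (n-1) ω⟫ ∂μ = 0 := by
    intro m hmN n hmn hnN
    obtain ⟨k, rfl⟩ : ∃ k, n = k+1 :=
      ⟨n-1, (Nat.succ_pred_eq_of_pos (lt_of_lt_of_le (Nat.succ_pos m) hmn)).symm⟩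
    have hmk : m ≤ k := Nat.lt_succ_iff.mp hmn
    simp only [Nat.add_sub_cancel]
    have hZint : Integrable (fun ω => f (k+1) ω - f k ω) μ :=
      (hf.integrable (k+1)).sub (hf.integrable k)
    have hZ0 : μ[(fun ω => f (k+1) ω - f k ω)|ℱ k] =ᵐ[μ] 0 := by
      have h1 : μ[(fun ω => f (k+1) ω - f k ω)|ℱ k]
          =ᵐ[μ] μ[f (k+1)|ℱ k] - μ[f k|ℱ k] :=
        condExp_sub (hf.integrable (k+1)) (hf.integrable k) (ℱ k)
      have h2 := hf.condExp_ae_eq (Nat.le_succ k)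
      have h3 := hf.condExp_ae_eq (le_refl k)
      filter_upwards [h1, h2, h3] with ω e1 e2 e3
      simp only [Pi.sub_apply, Pi.zero_apply] at *
      rw [e1, e2, e3, sub_self]
    have hXmeas : StronglyMeasurable[ℱ k]
        (fun ω => dW w m ω • ((2 * mstar f k ω)⁻¹ • f k ω)) :=
      (((hdm m).mono (ℱ.mono hmk)).smul (hum k))
    have hbound : ∀ ω, ‖dW w m ω • ((2 * mstar f k ω)⁻¹ • f k ω)‖ * ‖f (k+1) ω - f k ω‖
        ≤ mstar f N ω * runMax w N ω := by
      intro ω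
      have h1 : ‖dW w m ω • ((2 * mstar f k ω)⁻¹ • f k ω)‖ ≤ runMax w N ω * (1/2) := by
        rw [norm_smul, Real.norm_eq_abs, abs_of_nonneg (hd_nonneg m ω)]
        exact mul_le_mul (hd_bound m hmN ω) (u_norm_le f k ω) (norm_nonneg _) (hW_nonneg ω)
      have h2 : ‖f (k+1) ω - f k ω‖ ≤ 2 * mstar f N ω := by
        have := hdf_bound (k+1) hnN ω
        simpa using this
      calc ‖dW w m ω • ((2 * mstar f k ω)⁻¹ • f k ω)‖ * ‖f (k+1) ω - f k ω‖
          ≤ (runMax w N ω * (1/2)) * (2 * mstar f N ω) := by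
            apply mul_le_mul h1 h2 (norm_nonneg _)
            exact mul_nonneg (hW_nonneg ω) (by norm_num)
      _ = mstar f N ω * runMax w N ω := by ring
    have hzero := integral_inner_zero (ℱ.le k) hZint hZ0 hXmeas hR hbound
    rw [← hzero]
    apply integral_congr_ae
    apply Filter.Eventually.of_forall
    intro ω
    dsimp only
    simp only [real_inner_smul_left]
  -- the correction term: integrable with zero integral
  have hTm_rw : ∀ m, (fun ω => dW w m ω * ∑ n ∈ Finset.Icc (m+1) N,
      ⟪(2 * mstar f (n-1) ω)⁻¹ • f (n-1) ω, f n ω - f (n-1) ω⟫)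
      = fun ω => ∑ n ∈ Finset.Icc (m+1) N, dW w m ω *
      ⟪(2 * mstar f (n-1) ω)⁻¹ • f (n-1) ω, f n ω - f (n-1) ω⟫ := by
    intro m
    funext ω
    rw [Finset.mul_sum]
  have hTm_int : ∀ m ∈ Finset.range (N+1), Integrable (fun ω => dW w m ω *
      ∑ n ∈ Finset.Icc (m+1) N,
        ⟪(2 * mstar f (n-1) ω)⁻¹ • f (n-1) ω, f n ω - f (n-1) ω⟫) μ := by
    intro m hm
    rw [hTm_rw m]
    apply integrable_finset_sum
    intro n hn
    have hn' := Finset.mem_Icc.mp hn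
    exact hint_each m (Nat.lt_succ_iff.mp (Finset.mem_range.mp hm)) n hn'.1 hn'.2
  have hG_int : Integrable (fun ω => ∑ m ∈ Finset.range (N+1), dW w m ω *
      ∑ n ∈ Finset.Icc (m+1) N,
        ⟪(2 * mstar f (n-1) ω)⁻¹ • f (n-1) ω, f n ω - f (n-1) ω⟫) μ :=
    integrable_finset_sum _ hTm_int
  have hG_zero : ∫ ω, (∑ m ∈ Finset.range (N+1), dW w m ω *
      ∑ n ∈ Finset.Icc (m+1) N,
        ⟪(2 * mstar f (n-1) ω)⁻¹ • f (n-1) ω, f n ω - f (n-1) ω⟫) ∂μ = 0 := by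
    rw [integral_finset_sum _ hTm_int]
    apply Finset.sum_eq_zero
    intro m hm
    rw [hTm_rw m]
    rw [integral_finset_sum]
    · apply Finset.sum_eq_zero
      intro n hn
      have hn' := Finset.mem_Icc.mp hn
      exact hvanish m (Nat.lt_succ_iff.mp (Finset.mem_range.mp hm)) n hn'.1 hn'.2
    · intro n hn
      have hn' := Finset.mem_Icc.mp hn
      exact hint_each m (Nat.lt_succ_iff.mp (Finset.mem_range.mp hm)) n hn'.1 hn'.2
  -- put everything together
  have hM_int : Integrable (fun ω => mstar f N ω * runMax w N ω
      - ∑ m ∈ Finset.range (N+1), dW w m ω *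
        ∑ n ∈ Finset.Icc (m+1) N,
          ⟪(2 * mstar f (n-1) ω)⁻¹ • f (n-1) ω, f n ω - f (n-1) ω⟫) μ := hR.sub hG_int
  calc ∫ ω, (‖f 0 ω‖ * w 0 ω
        + (1/4) * ∑ n ∈ Finset.Icc 1 N, (‖f n ω - f (n-1) ω‖^2 / mstar f n ω) * w n ω) ∂μ
      ≤ ∫ ω, (mstar f N ω * runMax w N ω
        - ∑ m ∈ Finset.range (N+1), dW w m ω *
          ∑ n ∈ Finset.Icc (m+1) N,
            ⟪(2 * mstar f (n-1) ω)⁻¹ • f (n-1) ω, f n ω - f (n-1) ω⟫) ∂μ := by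
        apply integral_mono hL hM_int
        intro ω
        exact pointwise_bound f w hw_pos N ω
  _ = ∫ ω, mstar f N ω * runMax w N ω ∂μ := by
        rw [integral_sub hR hG_int, hG_zero, sub_zero]
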